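/- For m ≥ 3 and n ∈ {1,2,3}, the domination polynomial of the lollipop graph L_{m,n} is unimodal, with a mode at ⌊m/2⌋+1 if n=1, at ⌈m/2⌉+1 if n=2, and at ⌊m/2⌋+2 if n=3. -/

import Mathlib

/-!
A vertex set fails to dominate exactly when it lies in `V ∖ N[v]` for some closed neighbourhood
`N[v]`. In `L_{m,n}` only two (`n = 1, 2`) or three (`n = 3`) of these sets are maximal, so
inclusion–exclusion and Pascal's rule give, for the number `d i` of dominating `i`-sets,
`d (i+1) + C(1,i+1) = C(m,i) + C(m-1,i)`, `d (i+1) + C(2,i+1) = C(m+1,i) + C(m,i)` and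
`d (i+2) + C(3,i+2) = C(m+2,i+1) + C(m,i) + C(m-1,i)`.
Each right-hand side is a sum of binomial rows sharing the claimed mode, and the correction
`C(n, ·)` is non-increasing and vanishes from the mode on, so it does not disturb unimodality.
The exception is `m = n = 3`, where the correction is nonzero at the mode; there the two central
coefficients of `4x² + 14x³ + 14x⁴ + 6x⁵ + x⁶` are equal.
-/

/-- A finite set of vertices dominates the graph. -/
def Dominates {V : Type*} (G : SimpleGraph V) (U : Finset V) : Prop :=
  ∀ v : V, v ∈ U ∨ ∃ u ∈ U, G.Adj u v

/-- The number of dominating sets of size `i`. -/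
noncomputable def domCount {V : Type*} [Fintype V] (G : SimpleGraph V) (i : ℕ) : ℕ :=
  Nat.card {U : Finset V // U.card = i ∧ Dominates G U}

/-- The asymmetric adjacency relation of the lollipop graph `L_{m,n}`: a complete graph on
`Fin m`, a path on `Fin n`, and an edge joining vertex `0` of the complete graph to
the endpoint `0` of the path. -/
def lollipopRel {m n : ℕ} : (Fin m ⊕ Fin n) → (Fin m ⊕ Fin n) → Prop
  | .inl a, .inl b => a ≠ b
  | .inl a, .inr i => (a : ℕ) = 0 ∧ (i : ℕ) = 0
  | .inr i, .inr j => (i : ℕ) + 1 = (j : ℕ)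
  | _, _ => False

/-- The `(m,n)`-lollipop graph. -/
def lollipop (m n : ℕ) : SimpleGraph (Fin m ⊕ Fin n) :=
  SimpleGraph.fromRel lollipopRel

/-- The coefficient sequence is non-decreasing up to `k` and non-increasing afterwards,
so in particular `k` is a mode. -/
def UnimodalWithMode (d : ℕ → ℕ) (k : ℕ) : Prop :=
  (∀ i < k, d i ≤ d (i + 1)) ∧ (∀ i, k ≤ i → d (i + 1) ≤ d i)

open Finset

namespace Finset

variable {α β : Type*} [DecidableEq α] [DecidableEq β]

lemma powersetCard_inter (n : ℕ) (s t : Finset α) :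
    powersetCard n (s ∩ t) = powersetCard n s ∩ powersetCard n t := by
  ext u
  simp only [mem_powersetCard, mem_inter, subset_inter_iff]
  tauto

lemma card_union_union_add_card_inter (s t u : Finset α) :
    #(s ∪ t ∪ u) + #(s ∩ t) + #(s ∩ u) + #(t ∩ u) = #s + #t + #u + #(s ∩ t ∩ u) := by
  have h₁ := card_union_add_card_inter s t
  have h₂ := card_union_add_card_inter (s ∪ t) u
  have h₃ := card_union_add_card_inter (s ∩ u) (t ∩ u)
  rw [union_inter_distrib_right] at h₂
  rw [← inter_inter_distrib_right] at h₃
  omega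

lemma disjSum_inter_disjSum (s₁ s₂ : Finset α) (t₁ t₂ : Finset β) :
    s₁.disjSum t₁ ∩ s₂.disjSum t₂ = (s₁ ∩ s₂).disjSum (t₁ ∩ t₂) := by
  ext (a | b) <;> simp

end Finset

section Domination

variable {V : Type*} (G : SimpleGraph V)

lemma not_dominates_iff {U : Finset V} :
    ¬Dominates G U ↔ ∃ v, ∀ u ∈ U, u ≠ v ∧ ¬G.Adj u v := by
  simp only [Dominates, not_forall, not_or, not_exists, not_and]
  exact exists_congr fun v => ⟨fun h u hu => ⟨by rintro rfl; exact h.1 hu, h.2 u hu⟩,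
    fun h => ⟨fun hv => (h v hv).1 rfl, fun u hu => (h u hu).2⟩⟩

lemma not_dominates_iff_exists_subset {𝓑 : Finset (Finset V)}
    (h𝓑 : ∀ B ∈ 𝓑, ∃ v, ∀ u ∈ B, u ≠ v ∧ ¬G.Adj u v)
    (hcover : ∀ v, ∃ B ∈ 𝓑, ∀ u, u ≠ v → ¬G.Adj u v → u ∈ B) (U : Finset V) :
    ¬Dominates G U ↔ ∃ B ∈ 𝓑, U ⊆ B := by
  rw [not_dominates_iff]
  constructor
  · rintro ⟨v, hv⟩
    obtain ⟨B, hB, hvB⟩ := hcover v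
    exact ⟨B, hB, fun u hu => hvB u (hv u hu).1 (hv u hu).2⟩
  · rintro ⟨B, hB, hUB⟩
    obtain ⟨v, hv⟩ := h𝓑 B hB
    exact ⟨v, fun u hu => hv u (hUB hu)⟩

variable [Fintype V]

open Classical in
lemma domCount_eq_card_filter (i : ℕ) :
    domCount G i = #{U ∈ powersetCard i (univ : Finset V) | Dominates G U} := by
  rw [domCount, Nat.card_eq_fintype_card, Fintype.card_subtype]
  congr 1
  ext U
  simp

lemma domCount_zero [Nonempty V] : domCount G 0 = 0 := by
  classical
  rw [domCount_eq_card_filter, powersetCard_zero, card_eq_zero, filter_eq_empty_iff]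
  simp [Dominates]

open Classical in
lemma domCount_add_card_not_dominates (i : ℕ) :
    domCount G i + #{U ∈ powersetCard i (univ : Finset V) | ¬Dominates G U}
      = (Fintype.card V).choose i := by
  rw [domCount_eq_card_filter, card_filter_add_card_filter_not, card_powersetCard, card_univ]

open Classical in
lemma filter_not_dominates_eq_biUnion [DecidableEq V] {𝓑 : Finset (Finset V)}
    (h : ∀ U, ¬Dominates G U ↔ ∃ B ∈ 𝓑, U ⊆ B) (i : ℕ) :
    {U ∈ powersetCard i (univ : Finset V) | ¬Dominates G U} = 𝓑.biUnion (powersetCard i) := by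
  ext U
  simp only [mem_filter, mem_powersetCard, subset_univ, true_and, h, mem_biUnion]
  grind

lemma domCount_add_choose_add_choose [DecidableEq V] {B₁ B₂ : Finset V}
    (h : ∀ U, ¬Dominates G U ↔ U ⊆ B₁ ∨ U ⊆ B₂) (i : ℕ) :
    domCount G i + (#B₁).choose i + (#B₂).choose i
      = (Fintype.card V).choose i + (#(B₁ ∩ B₂)).choose i := by
  classical
  have hcount := domCount_add_card_not_dominates G i
  rw [filter_not_dominates_eq_biUnion G (𝓑 := {B₁, B₂}) (by simpa using h), biUnion_insert,
    singleton_biUnion] at hcount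
  have hIE := card_union_add_card_inter (powersetCard i B₁) (powersetCard i B₂)
  simp only [← powersetCard_inter, card_powersetCard] at hIE
  omega

lemma domCount_add_choose_add_choose_add_choose [DecidableEq V] {B₁ B₂ B₃ : Finset V}
    (h : ∀ U, ¬Dominates G U ↔ U ⊆ B₁ ∨ U ⊆ B₂ ∨ U ⊆ B₃) (i : ℕ) :
    domCount G i + (#B₁).choose i + (#B₂).choose i + (#B₃).choose i + (#(B₁ ∩ B₂ ∩ B₃)).choose i
      = (Fintype.card V).choose i + (#(B₁ ∩ B₂)).choose i + (#(B₁ ∩ B₃)).choose i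
        + (#(B₂ ∩ B₃)).choose i := by
  classical
  have hcount := domCount_add_card_not_dominates G i
  rw [filter_not_dominates_eq_biUnion G (𝓑 := {B₁, B₂, B₃}) (by simpa using h), biUnion_insert,
    biUnion_insert, singleton_biUnion, ← union_assoc] at hcount
  have hIE := card_union_union_add_card_inter (powersetCard i B₁) (powersetCard i B₂)
    (powersetCard i B₃)
  simp only [← powersetCard_inter, card_powersetCard] at hIE
  omega

end Domination

namespace Nat

lemma choose_le_choose_succ {n k : ℕ} (h : 2 * k + 1 ≤ n) : n.choose k ≤ n.choose (k + 1) := by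
  refine le_of_mul_le_mul_right (a := k + 1) ?_ k.succ_pos
  rw [choose_succ_right_eq]
  exact Nat.mul_le_mul_left _ (by omega)

lemma choose_succ_le_choose {n k : ℕ} (h : n ≤ 2 * k + 1) : n.choose (k + 1) ≤ n.choose k := by
  refine le_of_mul_le_mul_right (a := k + 1) ?_ k.succ_pos
  rw [choose_succ_right_eq]
  exact Nat.mul_le_mul_left _ (by omega)

end Nat

namespace UnimodalWithMode

variable {s d c : ℕ → ℕ} {k : ℕ}

lemma add {a b : ℕ → ℕ} (ha : UnimodalWithMode a k) (hb : UnimodalWithMode b k) :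
    UnimodalWithMode (fun i => a i + b i) k :=
  ⟨fun i hi => Nat.add_le_add (ha.1 i hi) (hb.1 i hi),
    fun i hi => Nat.add_le_add (ha.2 i hi) (hb.2 i hi)⟩

lemma comp_add_right {r : ℕ} (h : UnimodalWithMode d (k + r)) :
    UnimodalWithMode (fun i => d (i + r)) k :=
  ⟨fun i hi => by simpa only [Nat.add_right_comm] using h.1 (i + r) (by omega),
    fun i hi => by simpa only [Nat.add_right_comm] using h.2 (i + r) (by omega)⟩

lemma of_comp_add_right {r : ℕ} (h : UnimodalWithMode (fun i => d (i + r)) k)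
    (hd : ∀ i < r, d i = 0) : UnimodalWithMode d (k + r) := by
  refine ⟨fun i hi => ?_, fun i hi => ?_⟩
  · rcases Nat.lt_or_ge i r with hir | hir
    · simp [hd i hir]
    · obtain ⟨j, rfl⟩ := Nat.exists_eq_add_of_le' hir
      simpa only [Nat.add_right_comm] using h.1 j (by omega)
  · obtain ⟨j, rfl⟩ := Nat.exists_eq_add_of_le' (show r ≤ i by omega)
    simpa only [Nat.add_right_comm] using h.2 j (by omega)

lemma of_add_antitone (hs : UnimodalWithMode s k) (hsum : ∀ i, d i + c i = s i)
    (hc : Antitone c) (hc₀ : c (k + 1) = 0) (hk : d (k + 1) ≤ d k) : UnimodalWithMode d k := by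
  refine ⟨fun i hi => ?_, fun i hi => ?_⟩
  · have hs' := hs.1 i hi
    have hc' : c (i + 1) ≤ c i := hc i.le_succ
    rw [← hsum, ← hsum] at hs'
    omega
  · rcases hi.eq_or_lt with rfl | hi
    · exact hk
    · have h₁ : c i = 0 := Nat.eq_zero_of_le_zero (hc₀ ▸ hc hi)
      have h₂ : c (i + 1) = 0 := Nat.eq_zero_of_le_zero (hc₀ ▸ hc (by omega))
      have hs' := hs.2 i hi.le
      rw [← hsum, ← hsum] at hs'
      omega

lemma of_add_antitone_of_eq_zero (hs : UnimodalWithMode s k) (hsum : ∀ i, d i + c i = s i)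
    (hc : Antitone c) (hc₀ : c k = 0) : UnimodalWithMode d k := by
  have hc₁ : c (k + 1) = 0 := Nat.eq_zero_of_le_zero (hc₀ ▸ hc k.le_succ)
  refine hs.of_add_antitone hsum hc hc₁ ?_
  have hs' := hs.2 k le_rfl
  rw [← hsum, ← hsum] at hs'
  omega

end UnimodalWithMode

lemma unimodalWithMode_choose {n k : ℕ} (h₁ : n ≤ 2 * k + 1) (h₂ : 2 * k ≤ n + 1) :
    UnimodalWithMode n.choose k :=
  ⟨fun _ hi => Nat.choose_le_choose_succ (by omega),
    fun _ hi => Nat.choose_succ_le_choose (by omega)⟩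

lemma antitone_choose_add {n r : ℕ} (h : n ≤ 2 * r + 1) : Antitone fun i => n.choose (i + r) :=
  antitone_nat_of_succ_le fun i => by
    simpa only [Nat.add_right_comm] using Nat.choose_succ_le_choose (n := n) (k := i + r) (by omega)

section Lollipop

variable {m : ℕ}

lemma lollipop_adj {n : ℕ} {u v : Fin m ⊕ Fin n} :
    (lollipop m n).Adj u v ↔ u ≠ v ∧ (lollipopRel u v ∨ lollipopRel v u) :=
  SimpleGraph.fromRel_adj _ _ _

lemma lollipop_one_not_dominates_iff (hm : 2 ≤ m) (U : Finset (Fin m ⊕ Fin 1)) :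
    ¬Dominates (lollipop m 1) U ↔
      U ⊆ (univ.erase ⟨0, by omega⟩).disjSum ∅ ∨ U ⊆ (∅ : Finset (Fin m)).disjSum univ := by
  rw [not_dominates_iff_exists_subset (𝓑 := {(univ.erase ⟨0, by omega⟩).disjSum ∅,
    (∅ : Finset (Fin m)).disjSum univ}) _ ?_ ?_ U]
  · simp only [mem_insert, mem_singleton, exists_eq_or_imp, exists_eq_left]
  · simp only [mem_insert, mem_singleton, forall_eq_or_imp, forall_eq]
    refine ⟨⟨.inr 0, ?_⟩, ⟨.inl ⟨1, by omega⟩, ?_⟩⟩ <;> rintro (a | j) hu <;>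
      simp_all [lollipop_adj, lollipopRel, Fin.eq_mk_iff_val_eq, Fin.fin_one_eq_zero]
  · rintro (a | j)
    · refine ⟨_, mem_insert_of_mem (mem_singleton_self _), ?_⟩
      rintro (b | i) h₁ h₂ <;> simp_all [lollipop_adj, lollipopRel, Fin.fin_one_eq_zero]
    · refine ⟨_, mem_insert_self _ _, ?_⟩
      rintro (b | i) h₁ h₂ <;>
        simp_all [lollipop_adj, lollipopRel, Fin.eq_mk_iff_val_eq, Fin.fin_one_eq_zero]

lemma lollipop_two_not_dominates_iff (hm : 2 ≤ m) (U : Finset (Fin m ⊕ Fin 2)) :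
    ¬Dominates (lollipop m 2) U ↔
      U ⊆ (∅ : Finset (Fin m)).disjSum univ ∨ U ⊆ (univ : Finset (Fin m)).disjSum ∅ := by
  rw [not_dominates_iff_exists_subset (𝓑 := {(∅ : Finset (Fin m)).disjSum univ,
    (univ : Finset (Fin m)).disjSum ∅}) _ ?_ ?_ U]
  · simp only [mem_insert, mem_singleton, exists_eq_or_imp, exists_eq_left]
  · simp only [mem_insert, mem_singleton, forall_eq_or_imp, forall_eq]
    refine ⟨⟨.inl ⟨1, by omega⟩, ?_⟩, ⟨.inr 1, ?_⟩⟩ <;> rintro (a | j) hu <;>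
      simp_all [lollipop_adj, lollipopRel]
  · rintro (a | j)
    · refine ⟨_, mem_insert_self _ _, ?_⟩
      rintro (b | i) h₁ h₂ <;> simp_all [lollipop_adj, lollipopRel]
    · refine ⟨_, mem_insert_of_mem (mem_singleton_self _), ?_⟩
      rintro (b | i) h₁ h₂ <;> simp_all [lollipop_adj, lollipopRel]
      omega

lemma lollipop_three_not_dominates_iff (hm : 2 ≤ m) (U : Finset (Fin m ⊕ Fin 3)) :
    ¬Dominates (lollipop m 3) U ↔
      U ⊆ (∅ : Finset (Fin m)).disjSum univ ∨ U ⊆ (univ : Finset (Fin m)).disjSum {0} ∨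
        U ⊆ (univ.erase ⟨0, by omega⟩).disjSum {2} := by
  rw [not_dominates_iff_exists_subset (𝓑 := {(∅ : Finset (Fin m)).disjSum univ,
    (univ : Finset (Fin m)).disjSum {0}, (univ.erase ⟨0, by omega⟩).disjSum {2}}) _ ?_ ?_ U]
  · simp only [mem_insert, mem_singleton, exists_eq_or_imp, exists_eq_left]
  · simp only [mem_insert, mem_singleton, forall_eq_or_imp, forall_eq]
    refine ⟨⟨.inl ⟨1, by omega⟩, ?_⟩, ⟨.inr 2, ?_⟩, ⟨.inr 0, ?_⟩⟩ <;> rintro (a | j) hu <;>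
      simp_all [lollipop_adj, lollipopRel, Fin.eq_mk_iff_val_eq]
  · rintro (a | j)
    · refine ⟨_, mem_insert_self _ _, ?_⟩
      rintro (b | i) h₁ h₂ <;> simp_all [lollipop_adj, lollipopRel]
    · fin_cases j
      · refine ⟨_, mem_insert_of_mem (mem_insert_of_mem (mem_singleton_self _)), ?_⟩
        rintro (b | i) h₁ h₂ <;> simp_all [lollipop_adj, lollipopRel, Fin.eq_mk_iff_val_eq]
        omega
      all_goals
        refine ⟨_, mem_insert_of_mem (mem_insert_self _ _), ?_⟩
        rintro (b | i) h₁ h₂ <;> simp_all [lollipop_adj, lollipopRel]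
        omega

lemma domCount_lollipop_one_succ_add_choose (hm : 2 ≤ m) (i : ℕ) :
    domCount (lollipop m 1) (i + 1) + Nat.choose 1 (i + 1) = m.choose i + (m - 1).choose i := by
  have h := domCount_add_choose_add_choose _ (lollipop_one_not_dominates_iff hm) (i + 1)
  simp only [disjSum_inter_disjSum, inter_empty, empty_inter, card_disjSum, card_empty, card_univ,
    Fintype.card_fin, card_erase_of_mem, mem_univ, Fintype.card_sum, zero_add, add_zero,
    Nat.choose_zero_succ] at h
  have p₁ := Nat.choose_succ_succ' m i
  have p₂ := Nat.choose_succ_succ' (m - 1) i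
  rw [Nat.sub_add_cancel (by omega : 1 ≤ m)] at p₂
  omega

lemma domCount_lollipop_two_succ_add_choose (hm : 2 ≤ m) (i : ℕ) :
    domCount (lollipop m 2) (i + 1) + Nat.choose 2 (i + 1) = (m + 1).choose i + m.choose i := by
  have h := domCount_add_choose_add_choose _ (lollipop_two_not_dominates_iff hm) (i + 1)
  simp only [disjSum_inter_disjSum, inter_empty, empty_inter, card_disjSum, card_empty, card_univ,
    Fintype.card_fin, Fintype.card_sum, zero_add, add_zero, Nat.choose_zero_succ] at h
  have p₁ : (m + 2).choose (i + 1) = (m + 1).choose i + (m + 1).choose (i + 1) :=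
    Nat.choose_succ_succ' _ _
  have p₂ : (m + 1).choose (i + 1) = m.choose i + m.choose (i + 1) := Nat.choose_succ_succ' _ _
  omega

lemma domCount_lollipop_three_add_choose (hm : 2 ≤ m) (i : ℕ) :
    domCount (lollipop m 3) i + Nat.choose 3 i + (m + 1).choose i + m.choose i + Nat.choose 0 i
      = (m + 3).choose i + 2 * Nat.choose 1 i + (m - 1).choose i := by
  have h := domCount_add_choose_add_choose_add_choose _ (lollipop_three_not_dominates_iff hm) i
  have h02 : ({0} ∩ {2} : Finset (Fin 3)) = ∅ := by decide
  simp only [disjSum_inter_disjSum, empty_inter, univ_inter, h02, card_disjSum, card_empty,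
    card_univ, Fintype.card_fin, card_singleton, card_erase_of_mem, mem_univ, Fintype.card_sum,
    zero_add, add_zero] at h
  rw [Nat.sub_add_cancel (by omega : 1 ≤ m)] at h
  omega

lemma domCount_lollipop_three_of_lt_two (hm : 2 ≤ m) {i : ℕ} (hi : i < 2) :
    domCount (lollipop m 3) i = 0 := by
  have h := domCount_lollipop_three_add_choose hm i
  interval_cases i <;> simp only [Nat.choose_zero_right, Nat.choose_one_right] at h <;> omega

lemma domCount_lollipop_three_add_two_add_choose (hm : 2 ≤ m) (i : ℕ) :
    domCount (lollipop m 3) (i + 2) + Nat.choose 3 (i + 2)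
      = (m + 2).choose (i + 1) + m.choose i + (m - 1).choose i := by
  have h := domCount_lollipop_three_add_choose hm (i + 2)
  rw [Nat.choose_zero_succ, Nat.choose_eq_zero_of_lt (by omega : 1 < i + 2)] at h
  have p₁ : (m + 3).choose (i + 2) = (m + 2).choose (i + 1) + (m + 2).choose (i + 2) :=
    Nat.choose_succ_succ' _ _
  have p₂ : (m + 2).choose (i + 2) = (m + 1).choose (i + 1) + (m + 1).choose (i + 2) :=
    Nat.choose_succ_succ' _ _
  have p₃ : (m + 1).choose (i + 1) = m.choose i + m.choose (i + 1) := Nat.choose_succ_succ' _ _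
  have p₄ := Nat.choose_succ_succ' (m - 1) i
  have p₅ : (m - 1 + 1).choose (i + 2) = (m - 1).choose (i + 1) + (m - 1).choose (i + 2) :=
    Nat.choose_succ_succ' _ _
  rw [Nat.sub_add_cancel (by omega : 1 ≤ m)] at p₄ p₅
  omega

lemma unimodalWithMode_domCount_lollipop_one (hm : 2 ≤ m) :
    UnimodalWithMode (domCount (lollipop m 1)) (m / 2 + 1) := by
  have hS : UnimodalWithMode (fun i => m.choose i + (m - 1).choose i) (m / 2) :=
    (unimodalWithMode_choose (by omega) (by omega)).add
      (unimodalWithMode_choose (by omega) (by omega))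
  have hE : UnimodalWithMode (fun i => domCount (lollipop m 1) (i + 1)) (m / 2) :=
    hS.of_add_antitone_of_eq_zero (domCount_lollipop_one_succ_add_choose hm)
      (antitone_choose_add (by omega)) (Nat.choose_eq_zero_of_lt (by omega))
  refine hE.of_comp_add_right fun i hi => ?_
  obtain rfl : i = 0 := by omega
  exact domCount_zero _

lemma unimodalWithMode_domCount_lollipop_two (hm : 3 ≤ m) :
    UnimodalWithMode (domCount (lollipop m 2)) ((m + 1) / 2 + 1) := by
  have hS : UnimodalWithMode (fun i => (m + 1).choose i + m.choose i) ((m + 1) / 2) :=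
    (unimodalWithMode_choose (by omega) (by omega)).add
      (unimodalWithMode_choose (by omega) (by omega))
  have hE : UnimodalWithMode (fun i => domCount (lollipop m 2) (i + 1)) ((m + 1) / 2) :=
    hS.of_add_antitone_of_eq_zero (domCount_lollipop_two_succ_add_choose (by omega))
      (antitone_choose_add (by omega)) (Nat.choose_eq_zero_of_lt (by omega))
  refine hE.of_comp_add_right fun i hi => ?_
  obtain rfl : i = 0 := by omega
  exact domCount_zero _

lemma unimodalWithMode_domCount_lollipop_three (hm : 3 ≤ m) :
    UnimodalWithMode (domCount (lollipop m 3)) (m / 2 + 2) := by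
  have hS : UnimodalWithMode (fun i => (m + 2).choose (i + 1) + m.choose i + (m - 1).choose i)
      (m / 2) :=
    (((unimodalWithMode_choose (k := m / 2 + 1) (by omega) (by omega)).comp_add_right).add
      (unimodalWithMode_choose (by omega) (by omega))).add
      (unimodalWithMode_choose (by omega) (by omega))
  have hc : Antitone fun i => Nat.choose 3 (i + 2) := antitone_choose_add (by omega)
  have hE : UnimodalWithMode (fun i => domCount (lollipop m 3) (i + 2)) (m / 2) := by
    rcases (show m = 3 ∨ 4 ≤ m by omega) with rfl | hm
    · refine hS.of_add_antitone (domCount_lollipop_three_add_two_add_choose (by omega)) hc rfl ?_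
      show domCount (lollipop 3 3) 4 ≤ domCount (lollipop 3 3) 3
      have h₃ := domCount_lollipop_three_add_two_add_choose (m := 3) (by omega) 1
      have h₄ := domCount_lollipop_three_add_two_add_choose (m := 3) (by omega) 2
      norm_num [Nat.choose] at h₃ h₄
      omega
    · exact hS.of_add_antitone_of_eq_zero (domCount_lollipop_three_add_two_add_choose (by omega)) hc
        (Nat.choose_eq_zero_of_lt (by omega))
  exact hE.of_comp_add_right fun i hi => domCount_lollipop_three_of_lt_two (by omega) hi

end Lollipop

theorem lollipop_unimodal_small (m : ℕ) (hm : 3 ≤ m) :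
    UnimodalWithMode (domCount (lollipop m 1)) (m / 2 + 1) ∧
    UnimodalWithMode (domCount (lollipop m 2)) ((m + 1) / 2 + 1) ∧
    UnimodalWithMode (domCount (lollipop m 3)) (m / 2 + 2) :=
  ⟨unimodalWithMode_domCount_lollipop_one (by omega), unimodalWithMode_domCount_lollipop_two hm,
    unimodalWithMode_domCount_lollipop_three hm⟩
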